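/- arXiv:2008.01799 — 2 statements merged into one kernel-verified Lean document; each statement's English description precedes it below -/
import Mathlib

section
/- Let T be a commuting row contraction on H whose characteristic function is a polynomial of degree at most m. Then for every γ ∈ ℕ^n with |γ| ≥ m and every i ∈ {1, …, n}: (γ_i + 1) · T^γ D_{T*} = (|γ| + 1) · T_i* T_i T^γ D_{T*}. -/
/-!
Put `β = e_i + c`, so `|β| > m` and `θ_{T,β} = 0`. Evaluate `θ_{T,β}` at `D_T (e_i ⊗ g)`: since
`D_T² = I - T̂* T̂`, the `j`-th coordinate of `D_T² (e_i ⊗ g)` is `δ_{ij} g - T_j* T_i g`, and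
`T^{*(β - e_j)} T_j* = T^{*β}` by commutativity. This gives
`γ_c D_{T*} T^{*c} = (∑_j γ_{β-e_j}) D_{T*} T^{*β} T_i = γ_β D_{T*} T^{*β} T_i`
by Pascal's rule for multinomial coefficients. Take adjoints and use
`(c_i + 1) γ_β = (|c| + 1) γ_c`.
-/

open scoped InnerProductSpace

set_option maxHeartbeats 1000000
set_option synthInstance.maxHeartbeats 400000

noncomputable section

namespace RowContr

instance {n : ℕ} {H : Type*} [NormedAddCommGroup H] [CompleteSpace H] :
    CompleteSpace (PiLp 2 fun _ : Fin n => H) :=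
  inferInstance

/-- Ordered product `T^α = T 0 ^ α 0 ⬝ ⋯ ⬝ T (n-1) ^ α (n-1)`
(for commuting tuples the order is immaterial). -/
def mpow {n : ℕ} {H : Type*} [NormedAddCommGroup H] [InnerProductSpace ℂ H]
    (T : Fin n → H →L[ℂ] H) (α : Fin n → ℕ) : H →L[ℂ] H :=
  (List.ofFn fun i => (T i) ^ (α i)).prod

/-- The finset of all multi-indices `α : Fin n → ℕ` with `|α| = k`. -/
def multiIdx (n k : ℕ) : Finset (Fin n → ℕ) :=
  (Fintype.piFinset fun _ : Fin n => Finset.range (k + 1)).filter fun α => ∑ i, α i = k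

/-- The row operator `E^n → F` associated with a tuple of operators, acting on the
Hilbert direct sum `PiLp 2`. -/
def rowOp {n : ℕ} {E F : Type*} [NormedAddCommGroup E] [InnerProductSpace ℂ E]
    [NormedAddCommGroup F] [InnerProductSpace ℂ F]
    (T : Fin n → E →L[ℂ] F) : PiLp 2 (fun _ : Fin n => E) →L[ℂ] F :=
  ∑ i, (T i).comp (PiLp.proj 2 (fun _ : Fin n => E) i)

/-- The `α`-th Taylor coefficient of the characteristic function of `T`, where `Dstar`
plays the role of the defect operator `D_{T*}` and `D` the role of `D_T`:
`θ_{T,α} = ∑_{j : α_j ≥ 1} γ_{α-e_j} • D_{T*} T^{*(α-e_j)} P_j D_T`. -/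
def charCoeff {n : ℕ} {H : Type*} [NormedAddCommGroup H] [InnerProductSpace ℂ H]
    [CompleteSpace H] (T : Fin n → H →L[ℂ] H) (Dstar : H →L[ℂ] H)
    (D : PiLp 2 (fun _ : Fin n => H) →L[ℂ] PiLp 2 (fun _ : Fin n => H))
    (α : Fin n → ℕ) : PiLp 2 (fun _ : Fin n => H) →L[ℂ] H :=
  ∑ j ∈ Finset.univ.filter (fun j => 0 < α j),
    (Nat.multinomial Finset.univ (α - Pi.single j 1) : ℂ) •
      (Dstar ∘L (star (mpow T (α - Pi.single j 1))) ∘L (PiLp.proj 2 (fun _ : Fin n => H) j) ∘L D)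

/-- The closure of the span of `{T^α D_{T*} h : h ∈ H, |α| ≥ m}`. -/
def rangeSpanGE {n : ℕ} {H : Type*} [NormedAddCommGroup H] [InnerProductSpace ℂ H]
    (T : Fin n → H →L[ℂ] H) (Dstar : H →L[ℂ] H) (m : ℕ) : Submodule ℂ H :=
  (Submodule.span ℂ
    {x : H | ∃ (α : Fin n → ℕ) (h : H), m ≤ ∑ i, α i ∧ x = mpow T α (Dstar h)}).topologicalClosure

/-- The closure of the span of `{T^α D_{T*} h : h ∈ H, |α| = m}`. -/
def rangeSpanEQ {n : ℕ} {H : Type*} [NormedAddCommGroup H] [InnerProductSpace ℂ H]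
    (T : Fin n → H →L[ℂ] H) (Dstar : H →L[ℂ] H) (m : ℕ) : Submodule ℂ H :=
  (Submodule.span ℂ
    {x : H | ∃ (α : Fin n → ℕ) (h : H), ∑ i, α i = m ∧ x = mpow T α (Dstar h)}).topologicalClosure

/-- The closure of the span of `{T^α D_{T*} h : h ∈ H, α ∈ ℕ^n}`. -/
def rangeSpanAll {n : ℕ} {H : Type*} [NormedAddCommGroup H] [InnerProductSpace ℂ H]
    (T : Fin n → H →L[ℂ] H) (Dstar : H →L[ℂ] H) : Submodule ℂ H :=
  (Submodule.span ℂ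
    {x : H | ∃ (α : Fin n → ℕ) (h : H), x = mpow T α (Dstar h)}).topologicalClosure

/-- The set `H_c = {h ∈ H : ∑_{|α| = k} γ_α ‖T^{*α} h‖² = ‖h‖² for all k ∈ ℕ}`. -/
def Hc {n : ℕ} {H : Type*} [NormedAddCommGroup H] [InnerProductSpace ℂ H] [CompleteSpace H]
    (T : Fin n → H →L[ℂ] H) : Set H :=
  {h : H | ∀ k : ℕ, ∑ α ∈ multiIdx n k,
    (Nat.multinomial Finset.univ α : ℝ) * ‖star (mpow T α) h‖ ^ 2 = ‖h‖ ^ 2}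

end RowContr

open Finset ContinuousLinearMap

theorem List.prod_ofFn_mul_of_commute {M : Type*} [Monoid M] {n : ℕ} (f g : Fin n → M)
    (hfg : ∀ i j, Commute (f i) (g j)) :
    (List.ofFn fun i => f i * g i).prod = (List.ofFn f).prod * (List.ofFn g).prod := by
  induction n with
  | zero => simp
  | succ k ih =>
    have hcomm : Commute (g 0) (List.ofFn fun i => f i.succ).prod :=
      Commute.list_prod_right _ _ fun x hx => by
        obtain ⟨i, rfl⟩ := List.mem_ofFn.1 hx
        exact (hfg _ _).symm
    simp only [List.ofFn_succ, List.prod_cons, ih _ _ fun i j => hfg _ _]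
    rw [mul_assoc, mul_assoc, ← mul_assoc (g 0), hcomm.eq, mul_assoc]

theorem List.prod_ofFn_eq_of_ne_eq_one {M : Type*} [Monoid M] {n : ℕ} (f : Fin n → M)
    (j : Fin n) (h : ∀ i, i ≠ j → f i = 1) : (List.ofFn f).prod = f j := by
  induction n with
  | zero => exact j.elim0
  | succ k ih =>
    rw [List.ofFn_succ, List.prod_cons]
    rcases Fin.eq_zero_or_eq_succ j with rfl | ⟨j, rfl⟩
    · rw [List.prod_eq_one, mul_one]
      intro x hx
      obtain ⟨i, rfl⟩ := List.mem_ofFn.1 hx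
      exact h _ i.succ_ne_zero
    · rw [h 0 (Fin.succ_ne_zero j).symm, one_mul,
        ih _ j fun i hi => h i.succ ((Fin.succ_injective _).ne hi)]

theorem Pi.single_one_le_of_pos {ι : Type*} [DecidableEq ι] {β : ι → ℕ} {j : ι}
    (h : 0 < β j) : Pi.single j 1 ≤ β := fun i => by
  rcases eq_or_ne i j with rfl | hi
  · simpa using Nat.one_le_of_lt h
  · simp [hi]

theorem Nat.multinomial_univ_eq_choose_mul {ι : Type*} [Fintype ι] [DecidableEq ι]
    (f : ι → ℕ) (j : ι) :
    multinomial univ f = (∑ i, f i).choose (f j) * multinomial (univ.erase j) f := by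
  rw [← add_sum_erase _ _ (mem_univ j), ← multinomial_insert (notMem_erase j univ),
    insert_erase (mem_univ j)]

theorem Nat.add_one_mul_multinomial_single_add {ι : Type*} [Fintype ι] [DecidableEq ι]
    (c : ι → ℕ) (j : ι) :
    (c j + 1) * multinomial univ (Pi.single j 1 + c) = (∑ i, c i + 1) * multinomial univ c := by
  have hrest : multinomial (univ.erase j) (Pi.single j 1 + c) = multinomial (univ.erase j) c :=
    multinomial_congr fun i hi => by simp [(mem_erase.1 hi).1]
  have hsum : ∑ i, (Pi.single j 1 + c : ι → ℕ) i = ∑ i, c i + 1 := by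
    simp [sum_add_distrib, add_comm]
  rw [multinomial_univ_eq_choose_mul _ j, multinomial_univ_eq_choose_mul c j, hrest, hsum,
    Pi.add_apply, Pi.single_eq_same, add_comm 1 (c j), ← mul_assoc, ← mul_assoc,
    mul_comm (c j + 1), ← add_one_mul_choose_eq]

theorem Nat.sum_multinomial_sub_single {ι : Type*} [Fintype ι] [DecidableEq ι] (β : ι → ℕ)
    (hβ : β ≠ 0) :
    ∑ j ∈ univ.filter (fun j => 0 < β j), multinomial univ (β - Pi.single j 1) =
      multinomial univ β := by
  have hpos : 0 < ∑ i, β i := by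
    obtain ⟨j, hj⟩ := Function.ne_iff.1 hβ
    exact (Nat.pos_of_ne_zero hj).trans_le (single_le_sum (fun _ _ => Nat.zero_le _) (mem_univ j))
  apply Nat.eq_of_mul_eq_mul_left hpos
  calc (∑ i, β i) *
        ∑ j ∈ univ.filter (fun j => 0 < β j), multinomial univ (β - Pi.single j 1)
      = ∑ j ∈ univ.filter (fun j => 0 < β j), β j * multinomial univ β := by
        rw [mul_sum]
        refine sum_congr rfl fun j hj => ?_
        have hle := Pi.single_one_le_of_pos (mem_filter.1 hj).2
        obtain ⟨δ, rfl⟩ : ∃ δ, β = Pi.single j 1 + δ :=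
          ⟨β - Pi.single j 1, (add_tsub_cancel_of_le hle).symm⟩
        simpa [add_tsub_cancel_left, sum_add_distrib, add_comm] using
          (add_one_mul_multinomial_single_add δ j).symm
    _ = (∑ i, β i) * multinomial univ β := by
        rw [← sum_mul, sum_filter_of_ne fun j _ hj => Nat.pos_of_ne_zero hj]

namespace RowContr

section Mpow

variable {n : ℕ} {H : Type*} [NormedAddCommGroup H] [InnerProductSpace ℂ H]
  {T : Fin n → H →L[ℂ] H}

theorem mpow_add (hcomm : ∀ i j, Commute (T i) (T j)) (α β : Fin n → ℕ) :
    mpow T (α + β) = mpow T α * mpow T β := by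
  simp only [mpow, Pi.add_apply, pow_add]
  exact List.prod_ofFn_mul_of_commute _ _ fun i j => (hcomm i j).pow_pow _ _

theorem mpow_single (j : Fin n) : mpow T (Pi.single j 1) = T j :=
  (List.prod_ofFn_eq_of_ne_eq_one _ j fun i hi => by simp [hi]).trans (by simp)

theorem mpow_single_add (hcomm : ∀ i j, Commute (T i) (T j)) (j : Fin n) (α : Fin n → ℕ) :
    mpow T (Pi.single j 1 + α) = T j * mpow T α := by
  rw [mpow_add hcomm, mpow_single]

theorem mpow_eq_mul_mpow_sub_single (hcomm : ∀ i j, Commute (T i) (T j)) {β : Fin n → ℕ}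
    {j : Fin n} (hj : 0 < β j) : mpow T β = T j * mpow T (β - Pi.single j 1) := by
  conv_lhs => rw [← add_tsub_cancel_of_le (Pi.single_one_le_of_pos hj)]
  exact mpow_single_add hcomm j _

end Mpow

section RowOp

variable {n : ℕ} {E F : Type*} [NormedAddCommGroup E] [InnerProductSpace ℂ E]
  [NormedAddCommGroup F] [InnerProductSpace ℂ F]

theorem rowOp_single (T : Fin n → E →L[ℂ] F) (j : Fin n) (w : E) :
    rowOp T (PiLp.single 2 j w) = T j w := by
  simp [rowOp, apply_ite (T _)]

theorem adjoint_rowOp_apply [CompleteSpace E] [CompleteSpace F] (T : Fin n → E →L[ℂ] F)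
    (z : F) (j : Fin n) : adjoint (rowOp T) z j = adjoint (T j) z := by
  refine ext_inner_right ℂ fun v => ?_
  have hinner :
      ⟪adjoint (rowOp T) z j, v⟫_ℂ = ⟪adjoint (rowOp T) z, PiLp.single 2 j v⟫_ℂ := by
    simp [PiLp.inner_apply, apply_ite (inner ℂ _)]
  rw [hinner, adjoint_inner_left, rowOp_single, adjoint_inner_left]

end RowOp

section CharCoeff

variable {n : ℕ} {H : Type*} [NormedAddCommGroup H] [InnerProductSpace ℂ H] [CompleteSpace H]
  {T : Fin n → H →L[ℂ] H} {Dstar : H →L[ℂ] H}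
  {D : PiLp 2 (fun _ : Fin n => H) →L[ℂ] PiLp 2 (fun _ : Fin n => H)}

theorem defect_sq_single_apply (hD : D ∘L D = 1 - adjoint (rowOp T) ∘L rowOp T)
    (i j : Fin n) (g : H) :
    D (D (PiLp.single 2 i g)) j = (Pi.single i g : Fin n → H) j - star (T j) (T i g) := by
  rw [← comp_apply D D, hD]
  simp [rowOp_single, adjoint_rowOp_apply, star_eq_adjoint, Pi.single_apply]

theorem charCoeff_single_add_apply_defect_single (hcomm : ∀ i j, Commute (T i) (T j))
    (hD : D ∘L D = 1 - adjoint (rowOp T) ∘L rowOp T) (i : Fin n) (c : Fin n → ℕ) (g : H) :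
    charCoeff T Dstar D (Pi.single i 1 + c) (D (PiLp.single 2 i g)) =
      (Nat.multinomial univ c : ℂ) • Dstar (star (mpow T c) g) -
        (Nat.multinomial univ (Pi.single i 1 + c) : ℂ) •
          Dstar (star (mpow T (Pi.single i 1 + c)) (T i g)) := by
  set β := Pi.single i 1 + c
  have hβi : 0 < β i := by simp [β]
  simp only [charCoeff, _root_.sum_apply, smul_apply, comp_apply, PiLp.proj_apply,
    defect_sq_single_apply hD, map_sub, smul_sub, sum_sub_distrib]
  congr 1
  · rw [sum_eq_single_of_mem i (mem_filter.2 ⟨mem_univ i, hβi⟩) fun j _ hj => by simp [hj]]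
    simp [β, add_tsub_cancel_left]
  · rw [← Nat.sum_multinomial_sub_single β (Function.ne_iff.2 ⟨i, hβi.ne'⟩), Nat.cast_sum,
      sum_smul]
    refine sum_congr rfl fun j hj => ?_
    rw [mpow_eq_mul_mpow_sub_single hcomm (mem_filter.1 hj).2, star_mul, mul_apply_eq_comp]

theorem multinomial_smul_mpow_comp_eq_of_charCoeff_eq_zero (hcomm : ∀ i j, Commute (T i) (T j))
    (hDstar : IsSelfAdjoint Dstar) (hD : D ∘L D = 1 - adjoint (rowOp T) ∘L rowOp T)
    {i : Fin n} {c : Fin n → ℕ} (hθ : charCoeff T Dstar D (Pi.single i 1 + c) = 0) :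
    (Nat.multinomial univ c : ℂ) • (mpow T c ∘L Dstar) =
      (Nat.multinomial univ (Pi.single i 1 + c) : ℂ) •
        (star (T i) ∘L T i ∘L mpow T c ∘L Dstar) := by
  have hstar : (Nat.multinomial univ c : ℂ) • (Dstar * star (mpow T c)) =
      (Nat.multinomial univ (Pi.single i 1 + c) : ℂ) •
        (Dstar * star (mpow T (Pi.single i 1 + c)) * T i) := by
    ext g
    have h := charCoeff_single_add_apply_defect_single (Dstar := Dstar) hcomm hD i c g
    rw [hθ, zero_apply, eq_comm, sub_eq_zero] at h
    simpa using h
  have hadj := congrArg star hstar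
  simp only [star_smul, star_natCast, star_mul, star_star, hDstar.star_eq,
    mpow_single_add hcomm, mul_assoc] at hadj
  exact hadj

end CharCoeff

theorem statement_2_general {n : ℕ} {H : Type*} [NormedAddCommGroup H] [InnerProductSpace ℂ H]
    [CompleteSpace H]
    (T : Fin n → H →L[ℂ] H) (m : ℕ)
    (hcomm : ∀ i j, Commute (T i) (T j))
    (Dstar : H →L[ℂ] H) (hD1 : Dstar.IsPositive)
    (D : PiLp 2 (fun _ : Fin n => H) →L[ℂ] PiLp 2 (fun _ : Fin n => H))
    (hDT2 : D ∘L D = 1 - (ContinuousLinearMap.adjoint (rowOp T)) ∘L rowOp T)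
    (hpoly : ∀ β : Fin n → ℕ, m < ∑ i, β i → charCoeff T Dstar D β = 0) :
    ∀ c : Fin n → ℕ, m ≤ ∑ i, c i → ∀ i : Fin n,
      ((c i + 1 : ℕ) : ℂ) • (mpow T c ∘L Dstar)
        = (((∑ i, c i) + 1 : ℕ) : ℂ) • (star (T i) ∘L T i ∘L mpow T c ∘L Dstar) := by
  intro c hc i
  have hθ : charCoeff T Dstar D (Pi.single i 1 + c) = 0 :=
    hpoly _ (by simp [sum_add_distrib]; omega)
  have key := multinomial_smul_mpow_comp_eq_of_charCoeff_eq_zero hcomm hD1.isSelfAdjoint hDT2 hθ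
  have hγ : (Nat.multinomial univ c : ℂ) ≠ 0 := by exact_mod_cast (Nat.multinomial_pos _ _).ne'
  apply smul_right_injective _ hγ
  dsimp only
  rw [smul_comm, key, smul_smul, smul_smul, ← Nat.cast_mul, ← Nat.cast_mul,
    Nat.add_one_mul_multinomial_single_add, mul_comm]

theorem statement_2 {n : ℕ} {H : Type*} [NormedAddCommGroup H] [InnerProductSpace ℂ H]
    [CompleteSpace H]
    (T : Fin n → H →L[ℂ] H) (m : ℕ)
    (hcomm : ∀ i j, Commute (T i) (T j))
    (hrow : ((1 : H →L[ℂ] H) - ∑ i, T i ∘L star (T i)).IsPositive)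
    (Dstar : H →L[ℂ] H) (hD1 : Dstar.IsPositive)
    (hD2 : Dstar ∘L Dstar = 1 - ∑ i, T i ∘L star (T i))
    (D : PiLp 2 (fun _ : Fin n => H) →L[ℂ] PiLp 2 (fun _ : Fin n => H))
    (hDT1 : D.IsPositive)
    (hDT2 : D ∘L D = 1 - (ContinuousLinearMap.adjoint (rowOp T)) ∘L rowOp T)
    (hpoly : ∀ β : Fin n → ℕ, m < ∑ i, β i → charCoeff T Dstar D β = 0) :
    ∀ c : Fin n → ℕ, m ≤ ∑ i, c i → ∀ i : Fin n,
      ((c i + 1 : ℕ) : ℂ) • (mpow T c ∘L Dstar)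
        = (((∑ i, c i) + 1 : ℕ) : ℂ) • (star (T i) ∘L T i ∘L mpow T c ∘L Dstar) :=
  statement_2_general T m hcomm Dstar hD1 D hDT2 hpoly

end RowContr
end
end

section
/- Let T be a commuting row contraction on H and set H_c := {h ∈ H : ∑_{α ∈ ℕ^n, |α| = k} γ_α ‖T^{*α} h‖² = ‖h‖² for all k ∈ ℕ}. Then: (a) H_c is a closed linear subspace of H; (b) T_i* H_c ⊆ H_c for every i; (c) H_c is maximal among subspaces on which the adjoint row operator acts isometrically: if L is a closed subspace of H with T_i* L ⊆ L for all i and ∑_{i=1}^n ‖T_i* h‖² = ‖h‖² for every h ∈ L, then L ⊆ H_c. -/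
open scoped InnerProductSpace

set_option maxHeartbeats 1000000
set_option synthInstance.maxHeartbeats 400000

noncomputable section

namespace RowContr

/-!
Let `Φ(X) = ∑ Tᵢ X Tᵢ*`. For a commuting tuple the maps `X ↦ Tᵢ X Tᵢ*` commute, so the
multinomial theorem gives `Φᵏ(1) = ∑_{|α| = k} γ_α T^α T^{*α}`, and `h ∈ H_c` says exactly that
`⟪(1 - Φᵏ(1)) h, h⟫ = 0` for all `k`. Since `Φ` is monotone and `Φ(1) ≤ 1`, every defect
`Dₖ = 1 - Φᵏ(1)` is a positive operator, so that `H_c = ⋂ₖ ker Dₖ` is a closed subspace.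
The rest follows from `Dₖ₊₁ = D₁ + Φ(Dₖ)`: if `Dₖ₊₁ h = 0`, then the positive summand
`Tᵢ Dₖ Tᵢ*` of `Φ(Dₖ) ≤ Dₖ₊₁` also kills `h`, whence `Dₖ Tᵢ* h = 0`; and on an invariant subspace
on which `D₁` vanishes, every `Dₖ` vanishes by induction.
-/

section StarAlgebra

variable (K : Type*) {R ι : Type*} [CommSemiring K] [Ring R] [StarRing R] [Algebra K R]
  [Fintype ι]

def conjugateHom : R →* Module.End K R where
  toFun a := LinearMap.mulLeftRight K (a, star a)
  map_one' := by ext; simp [LinearMap.mulLeftRight_apply]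
  map_mul' a b := by ext; simp [LinearMap.mulLeftRight_apply, mul_assoc]

def rowConj (T : ι → R) : Module.End K R := ∑ i, conjugateHom K (T i)

def rowDefect (T : ι → R) (k : ℕ) : R := 1 - (rowConj K T ^ k) 1

variable {K}

@[simp]
lemma conjugateHom_apply (a x : R) : conjugateHom K a x = a * x * star a := rfl

lemma rowConj_apply (T : ι → R) (x : R) : rowConj K T x = ∑ i, T i * x * star (T i) := by
  simp [rowConj, LinearMap.sum_apply]

lemma rowConj_pow_eq_sum [DecidableEq ι] {T : ι → R} (hT : ∀ i j, Commute (T i) (T j)) (k : ℕ) :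
    rowConj K T ^ k = ∑ α ∈ Finset.univ.piAntidiag k, Nat.multinomial Finset.univ α •
      conjugateHom K (Finset.univ.noncommProd (fun i => T i ^ α i)
        (Pairwise.set_pairwise (fun i j _ => (hT i j).pow_pow (α i) (α j)) _)) := by
  rw [rowConj, Finset.sum_pow_eq_sum_piAntidiag_of_commute _ _
    (Pairwise.set_pairwise (fun i j _ => (hT i j).map (conjugateHom K)) _)]
  refine Finset.sum_congr rfl fun α _ => ?_
  rw [nsmul_eq_mul, Finset.map_noncommProd (g := conjugateHom K)]
  simp only [map_pow]

lemma rowDefect_zero (T : ι → R) : rowDefect K T 0 = 0 := by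
  simp [rowDefect]

lemma rowDefect_succ (T : ι → R) (k : ℕ) :
    rowDefect K T (k + 1) = rowDefect K T 1 + rowConj K T (rowDefect K T k) := by
  simp only [rowDefect, map_sub, pow_one]
  rw [pow_succ', Module.End.mul_apply]
  abel

end StarAlgebra

section StarOrderedAlgebra

variable {K R ι : Type*} [CommSemiring K] [Ring R] [StarRing R] [Algebra K R] [PartialOrder R]
  [StarOrderedRing R] [Fintype ι] {T : ι → R}

lemma rowConj_mono : Monotone (rowConj K T) := fun x y hxy => by
  simp only [rowConj_apply]
  exact Finset.sum_le_sum fun i _ => star_right_conjugate_le_conjugate hxy (T i)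

lemma rowConj_pow_one_le_one (hT : rowConj K T 1 ≤ 1) (k : ℕ) : (rowConj K T ^ k) 1 ≤ 1 := by
  induction k with
  | zero => simp
  | succ k ih =>
    rw [pow_succ', Module.End.mul_apply]
    exact (rowConj_mono ih).trans hT

lemma rowDefect_nonneg (hT : rowConj K T 1 ≤ 1) (k : ℕ) : 0 ≤ rowDefect K T k :=
  sub_nonneg.mpr (rowConj_pow_one_le_one hT k)

lemma rowConj_nonneg {x : R} (hx : 0 ≤ x) : 0 ≤ rowConj K T x :=
  map_zero (rowConj K T) ▸ rowConj_mono hx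

end StarOrderedAlgebra

section HilbertSpace

open ContinuousLinearMap RCLike

variable {H : Type*} [NormedAddCommGroup H] [InnerProductSpace ℂ H] [CompleteSpace H]

lemma inner_conjugate_apply_self (X A : H →L[ℂ] H) (x : H) :
    ⟪(X * A * star X) x, x⟫_ℂ = ⟪A (star X x), star X x⟫_ℂ := by
  rw [mul_apply_eq_comp, mul_apply_eq_comp, star_eq_adjoint, ← adjoint_inner_right]

lemma apply_eq_zero_iff_re_inner_eq_zero {A : H →L[ℂ] H} (hA : 0 ≤ A) (x : H) :
    A x = 0 ↔ re ⟪A x, x⟫_ℂ = 0 := by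
  refine ⟨fun h => by simp [h], fun h => ?_⟩
  obtain ⟨S, rfl⟩ := CStarAlgebra.nonneg_iff_eq_star_mul_self.mp hA
  have hS : S x = 0 := by
    rwa [mul_apply_eq_comp, star_eq_adjoint, adjoint_inner_left, inner_self_eq_norm_sq,
      sq_eq_zero_iff, norm_eq_zero] at h
  simp [hS]

lemma apply_eq_zero_of_le {A B : H →L[ℂ] H} (hA : 0 ≤ A) (hAB : A ≤ B) {x : H} (hBx : B x = 0) :
    A x = 0 := by
  refine (apply_eq_zero_iff_re_inner_eq_zero hA x).mpr (le_antisymm ?_ ?_)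
  · simpa [hBx] using ((le_def A B).mp hAB).re_inner_nonneg_left x
  · exact ((nonneg_iff_isPositive A).mp hA).re_inner_nonneg_left x

variable {ι : Type*} [Fintype ι] {T : ι → H →L[ℂ] H}

lemma rowConj_one_le_one_iff :
    rowConj ℂ T 1 ≤ 1 ↔ ((1 : H →L[ℂ] H) - ∑ i, T i ∘L star (T i)).IsPositive := by
  simp [le_def, rowConj_apply, mul_def]

lemma re_inner_rowDefect_one (x : H) :
    re ⟪rowDefect ℂ T 1 x, x⟫_ℂ = ‖x‖ ^ 2 - ∑ i, ‖star (T i) x‖ ^ 2 := by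
  simp only [rowDefect, pow_one, rowConj_apply, sub_apply, sum_apply, inner_sub_left, sum_inner,
    map_sub, map_sum, inner_conjugate_apply_self, one_apply_eq_self, inner_self_eq_norm_sq]

lemma rowDefect_apply_star_eq_zero (hrow : rowConj ℂ T 1 ≤ 1) {k : ℕ} {x : H}
    (hx : rowDefect ℂ T (k + 1) x = 0) (i : ι) : rowDefect ℂ T k (star (T i) x) = 0 := by
  have hD := rowDefect_nonneg hrow k
  have hconj : ∀ j, 0 ≤ T j * rowDefect ℂ T k * star (T j) :=
    fun j => star_right_conjugate_nonneg hD (T j)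
  have hrowConj : rowConj ℂ T (rowDefect ℂ T k) x = 0 := by
    refine apply_eq_zero_of_le (rowConj_nonneg hD) ?_ hx
    rw [rowDefect_succ]
    exact le_add_of_nonneg_left (rowDefect_nonneg hrow 1)
  have hi : (T i * rowDefect ℂ T k * star (T i)) x = 0 := by
    refine apply_eq_zero_of_le (hconj i) ?_ hrowConj
    rw [rowConj_apply]
    exact Finset.single_le_sum (fun j _ => hconj j) (Finset.mem_univ i)
  rw [apply_eq_zero_iff_re_inner_eq_zero hD, ← inner_conjugate_apply_self, hi, inner_zero_left,
    map_zero]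

lemma rowDefect_apply_eq_zero_of_invariant {s : Set H} (hs : ∀ i, ∀ x ∈ s, star (T i) x ∈ s)
    (h1 : ∀ x ∈ s, rowDefect ℂ T 1 x = 0) (k : ℕ) : ∀ x ∈ s, rowDefect ℂ T k x = 0 := by
  induction k with
  | zero => simp [rowDefect_zero]
  | succ k ih =>
    intro x hx
    rw [rowDefect_succ, add_apply, rowConj_apply, sum_apply, h1 x hx, zero_add]
    exact Finset.sum_eq_zero fun i _ => by simp [ih _ (hs i x hx)]

end HilbertSpace

section RowContraction

open ContinuousLinearMap RCLike

variable {n : ℕ} {H : Type*} [NormedAddCommGroup H] [InnerProductSpace ℂ H] {T : Fin n → H →L[ℂ] H}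

lemma mpow_eq_noncommProd (hT : ∀ i j, Commute (T i) (T j)) (α : Fin n → ℕ) :
    mpow T α = Finset.univ.noncommProd (fun i => T i ^ α i)
      (Pairwise.set_pairwise (fun i j _ => (hT i j).pow_pow (α i) (α j)) _) := by
  rw [mpow, List.ofFn_eq_map, ← Finset.noncommProd_toFinset _ _ ?_ (List.nodup_finRange n)]
  · simp
  · exact Pairwise.set_pairwise (fun i j _ => (hT i j).pow_pow (α i) (α j)) _

variable [CompleteSpace H]

lemma multiIdx_eq_piAntidiag (k : ℕ) : multiIdx n k = Finset.univ.piAntidiag k := by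
  ext α
  simp only [multiIdx, Finset.mem_filter, Fintype.mem_piFinset, Finset.mem_range,
    Finset.mem_piAntidiag, Finset.mem_univ, implies_true, and_true, and_iff_right_iff_imp]
  intro hα i
  exact Nat.lt_succ_of_le (hα ▸ Finset.single_le_sum (fun j _ => Nat.zero_le (α j))
    (Finset.mem_univ i))

lemma rowConj_pow_one_eq_sum (hT : ∀ i j, Commute (T i) (T j)) (k : ℕ) :
    (rowConj ℂ T ^ k) 1 =
      ∑ α ∈ multiIdx n k, Nat.multinomial Finset.univ α • (mpow T α * star (mpow T α)) := by
  rw [rowConj_pow_eq_sum hT, multiIdx_eq_piAntidiag, LinearMap.sum_apply]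
  refine Finset.sum_congr rfl fun α _ => ?_
  rw [LinearMap.smul_apply, conjugateHom_apply, mul_one, mpow_eq_noncommProd hT]

lemma re_inner_rowConj_pow_one (hT : ∀ i j, Commute (T i) (T j)) (k : ℕ) (h : H) :
    re ⟪(rowConj ℂ T ^ k) 1 h, h⟫_ℂ =
      ∑ α ∈ multiIdx n k, (Nat.multinomial Finset.univ α : ℝ) * ‖star (mpow T α) h‖ ^ 2 := by
  rw [rowConj_pow_one_eq_sum hT, sum_apply, sum_inner, map_sum]
  refine Finset.sum_congr rfl fun α _ => ?_
  rw [smul_apply, ← Nat.cast_smul_eq_nsmul ℂ, inner_smul_left, mul_apply_eq_comp, star_eq_adjoint,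
    ← adjoint_inner_right, inner_self_eq_norm_sq_to_K]
  simp [← Complex.ofReal_pow]

lemma mem_Hc_iff (hT : ∀ i j, Commute (T i) (T j)) (hrow : rowConj ℂ T 1 ≤ 1) (h : H) :
    h ∈ Hc T ↔ ∀ k, rowDefect ℂ T k h = 0 := by
  refine forall_congr' fun k => ?_
  rw [apply_eq_zero_iff_re_inner_eq_zero (rowDefect_nonneg hrow k), rowDefect, sub_apply,
    inner_sub_left, map_sub, one_apply_eq_self, re_inner_rowConj_pow_one hT, inner_self_eq_norm_sq,
    sub_eq_zero, eq_comm]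

end RowContraction

theorem statement_11 {n : ℕ} {H : Type*} [NormedAddCommGroup H] [InnerProductSpace ℂ H]
    [CompleteSpace H]
    (T : Fin n → H →L[ℂ] H)
    (hcomm : ∀ i j, Commute (T i) (T j))
    (hrow : ((1 : H →L[ℂ] H) - ∑ i, T i ∘L star (T i)).IsPositive) :
    (∃ HcSub : Submodule ℂ H, (HcSub : Set H) = Hc T ∧ IsClosed (HcSub : Set H)) ∧
    (∀ i : Fin n, ∀ h ∈ Hc T, star (T i) h ∈ Hc T) ∧
    (∀ L : Submodule ℂ H, IsClosed (L : Set H) →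
      (∀ i : Fin n, ∀ h ∈ L, star (T i) h ∈ L) →
      (∀ h ∈ L, ∑ i, ‖star (T i) h‖ ^ 2 = ‖h‖ ^ 2) →
      (L : Set H) ⊆ Hc T) := by
  have hrowConj : rowConj ℂ T 1 ≤ 1 := rowConj_one_le_one_iff.mpr hrow
  have hHc := mem_Hc_iff hcomm hrowConj
  refine ⟨⟨⨅ k, (rowDefect ℂ T k).ker, ?_, ?_⟩, ?_, ?_⟩
  · ext h
    simp [hHc]
  · rw [Submodule.coe_iInf]
    exact isClosed_iInter fun k => (rowDefect ℂ T k).isClosed_ker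
  · intro i h hh
    exact (hHc _).mpr fun k => rowDefect_apply_star_eq_zero hrowConj ((hHc h).mp hh (k + 1)) i
  · intro L _ hinv hiso h hL
    have h1 : ∀ x ∈ (L : Set H), rowDefect ℂ T 1 x = 0 := fun x hx =>
      (apply_eq_zero_iff_re_inner_eq_zero (rowDefect_nonneg hrowConj 1) x).mpr
        (by rw [re_inner_rowDefect_one, hiso x hx, sub_self])
    exact (hHc h).mpr fun k => rowDefect_apply_eq_zero_of_invariant hinv h1 k h hL

end RowContr
end
end
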